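/- For every real inner product space and every family of vectors (V_w), the following Pythagorean decomposition with expectations removed holds at every grade n: ‖(id−E)∘id‖² = ‖(id−E)∘½(id−S)‖² + ‖(id−E)∘½(id+S)‖², where the inner product is taken over the words of length n. (This establishes that the sinhlog integrator is efficient: its leading-order mean-square error ‖(id−E)∘½(id−S)‖² never exceeds that of the stochastic Taylor integrator ‖(id−E)∘id‖².) -/

import Mathlib

open Finsupp

/-- Words over the alphabet `A = {0,1,…,d}`. -/
abbrev Word (d : ℕ) : Type := List (Fin (d+1))

/-- The free real vector space with basis the set of all words. -/
abbrev KA (d : ℕ) : Type := Word d →₀ ℝ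

/-- Shuffle product of two words, as an element of `KA d`. -/
noncomputable def shuffleWord (d : ℕ) : Word d → Word d → KA d
  | [], v => Finsupp.single v 1
  | a :: u, [] => Finsupp.single (a :: u) 1
  | a :: u, b :: v =>
      Finsupp.mapDomain (List.cons a) (shuffleWord d u (b :: v)) +
      Finsupp.mapDomain (List.cons b) (shuffleWord d (a :: u) v)
  termination_by u v => u.length + v.length

/-- Bilinear extension of the shuffle product to `KA d`. -/
noncomputable def sh (d : ℕ) (x y : KA d) : KA d :=
  x.sum fun u cu => y.sum fun v cv => (cu * cv) • shuffleWord d u v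

/-- Admissible words: concatenations of blocks each of which is the single
letter `0` or a pair `aa` with `a ≠ 0`. -/
inductive Admissible (d : ℕ) : Word d → Prop
  | nil : Admissible d []
  | zero {w : Word d} : Admissible d w → Admissible d (0 :: w)
  | pair {w : Word d} (a : Fin (d+1)) : a ≠ 0 → Admissible d w →
      Admissible d (a :: a :: w)

/-- Number of `0` letters. -/
def zc (d : ℕ) (w : Word d) : ℕ := w.count 0

/-- Half the number of nonzero letters. -/
def dc (d : ℕ) (w : Word d) : ℕ := (w.length - w.count 0) / 2

def nc (d : ℕ) (w : Word d) : ℕ := zc d w + dc d w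

open Classical in
/-- The expectation map on words. -/
noncomputable def Ebar (d : ℕ) (t : ℝ) (w : Word d) : ℝ :=
  if Admissible d w then t ^ nc d w / (2 ^ dc d w * Nat.factorial (nc d w)) else 0

/-- Linear extension of the expectation map to `KA d`. -/
noncomputable def EbarL (d : ℕ) (t : ℝ) (x : KA d) : ℝ :=
  x.sum fun w c => c * Ebar d t w

/-- The linear endomorphism of `KA d` determined by values on basis words. -/
noncomputable def wordLift (d : ℕ) (f : Word d → KA d) : KA d →ₗ[ℝ] KA d :=
  Finsupp.lsum ℝ fun w => LinearMap.toSpanSingleton ℝ (KA d) (f w)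

/-- The identity endomorphism `id`. -/
noncomputable def idE (d : ℕ) : KA d →ₗ[ℝ] KA d := LinearMap.id

/-- The reversal endomorphism `|S|`. -/
noncomputable def revE (d : ℕ) : KA d →ₗ[ℝ] KA d :=
  wordLift d fun w => Finsupp.single w.reverse 1

/-- The antipode `S`. -/
noncomputable def Sa (d : ℕ) : KA d →ₗ[ℝ] KA d :=
  wordLift d fun w => Finsupp.single w.reverse ((-1 : ℝ) ^ w.length)

/-- The convolution unit `ν`. -/
noncomputable def nuE (d : ℕ) : KA d →ₗ[ℝ] KA d :=
  wordLift d fun w => if w = [] then Finsupp.single ([] : Word d) 1 else 0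

/-- The expectation endomorphism `E`. -/
noncomputable def EE (d : ℕ) (t : ℝ) : KA d →ₗ[ℝ] KA d :=
  wordLift d fun w => Finsupp.single ([] : Word d) (Ebar d t w)

/-- The convolution product `X ⋆ Y`. -/
noncomputable def conv (d : ℕ) (X Y : KA d →ₗ[ℝ] KA d) : KA d →ₗ[ℝ] KA d :=
  wordLift d fun w => ∑ k ∈ Finset.range (w.length + 1),
    sh d (X (Finsupp.single (w.take k) 1)) (Y (Finsupp.single (w.drop k) 1))

/-- Convolution powers, `X^{⋆0} = ν`. -/
noncomputable def convPow (d : ℕ) (X : KA d →ₗ[ℝ] KA d) : ℕ → (KA d →ₗ[ℝ] KA d)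
  | 0 => nuE d
  | k + 1 => conv d X (convPow d X k)

/-- The inner product `⟨X,Y⟩` of endomorphisms, taken over the words of
length `n`, relative to the family of vectors `Vf`. -/
noncomputable def ip (d : ℕ) (t : ℝ) {H : Type*} [NormedAddCommGroup H]
    [InnerProductSpace ℝ H] (Vf : Word d → H) (n : ℕ)
    (X Y : KA d →ₗ[ℝ] KA d) : ℝ :=
  ∑ u : Fin n → Fin (d+1), ∑ v : Fin n → Fin (d+1),
    EbarL d t (sh d (X (Finsupp.single (List.ofFn u) 1))
                    (Y (Finsupp.single (List.ofFn v) 1))) *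
      (inner ℝ (Vf (List.ofFn u)) (Vf (List.ofFn v)) : ℝ)

/-- Positive semidefiniteness of the expectation Gram matrix at grade `n`:
indexed by the words of length `n` together with the empty word. -/
def gramPSD (d n : ℕ) (t : ℝ) : Prop :=
  ∀ c : Option (Fin n → Fin (d+1)) → ℝ,
    0 ≤ ∑ x : Option (Fin n → Fin (d+1)), ∑ y : Option (Fin n → Fin (d+1)),
      c x * c y *
        EbarL d t (shuffleWord d (x.elim ([] : Word d) List.ofFn)
                                 (y.elim ([] : Word d) List.ofFn))

/-! Reversal of words commutes with the shuffle product, fixes the empty word and preserves `Ē`,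
so it preserves the centred form `β(x, y) = Ē((x - E x) ⧢ (y - E y))`. On a word `w` the
antipode is reversal times `(-1) ^ |w|`, and for two words of the same length the signs cancel:
`β(S x, S y) = β(x, y)`. Expanding `β(x, y)` along `x = ½(x - S x) + ½(x + S x)` and likewise
for `y`, this invariance makes the two cross terms cancel; then sum over pairs of words of
length `n`. -/

theorem LinearMap.apply_eq_apply_half_sub_add_apply_half_add {K M N : Type*} [Field K]
    [NeZero (2 : K)] [AddCommGroup M] [Module K M] [AddCommGroup N] [Module K N]
    (β : M →ₗ[K] M →ₗ[K] N) (T : M →ₗ[K] M) {a b : M} (h : β (T a) (T b) = β a b) :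
    β a b = β ((1 / 2 : K) • (a - T a)) ((1 / 2 : K) • (b - T b))
      + β ((1 / 2 : K) • (a + T a)) ((1 / 2 : K) • (b + T b)) := by
  simp only [map_smul, map_sub, map_add, LinearMap.smul_apply, LinearMap.sub_apply,
    LinearMap.add_apply, h]
  match_scalars <;> field_simp <;> ring

theorem Admissible.append {d : ℕ} {w₁ w₂ : Word d} (h₁ : Admissible d w₁)
    (h₂ : Admissible d w₂) : Admissible d (w₁ ++ w₂) := by
  induction h₁ with
  | nil => simpa
  | zero _ ih => exact .zero ih
  | pair a ha _ ih => exact .pair a ha ih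

theorem Admissible.reverse {d : ℕ} {w : Word d} (h : Admissible d w) :
    Admissible d w.reverse := by
  induction h with
  | nil => exact .nil
  | zero _ ih => simpa using ih.append (.zero .nil)
  | pair a ha _ ih => simpa using ih.append (.pair a ha .nil)

theorem Admissible.reverse_iff {d : ℕ} {w : Word d} : Admissible d w.reverse ↔ Admissible d w :=
  ⟨fun h => by simpa using h.reverse, Admissible.reverse⟩

section

variable {d : ℕ}

theorem wordLift_single (f : Word d → KA d) (w : Word d) (c : ℝ) :
    wordLift d f (single w c) = c • f w := by
  simp [wordLift]

@[simp] theorem shuffleWord_nil_left (v : Word d) : shuffleWord d [] v = single v 1 := by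
  rw [shuffleWord]

@[simp] theorem shuffleWord_nil_right (u : Word d) : shuffleWord d u [] = single u 1 := by
  cases u <;> rw [shuffleWord]

theorem shuffleWord_cons_cons (a b : Fin (d + 1)) (u v : Word d) :
    shuffleWord d (a :: u) (b :: v) =
      mapDomain (List.cons a) (shuffleWord d u (b :: v)) +
      mapDomain (List.cons b) (shuffleWord d (a :: u) v) := by
  rw [shuffleWord]

noncomputable def shuffleBilin (d : ℕ) : KA d →ₗ[ℝ] KA d →ₗ[ℝ] KA d :=
  Finsupp.lsum ℝ fun u => LinearMap.toSpanSingleton ℝ _ (linearCombination ℝ (shuffleWord d u))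

theorem sh_eq_shuffleBilin (x y : KA d) : sh d x y = shuffleBilin d x y := by
  simp [sh, shuffleBilin, linearCombination_apply, Finsupp.smul_sum, mul_smul]

theorem shuffleBilin_single_single (u v : Word d) (a b : ℝ) :
    shuffleBilin d (single u a) (single v b) = (a * b) • shuffleWord d u v := by
  simp [shuffleBilin, mul_smul]

theorem EbarL_eq_linearCombination (t : ℝ) : EbarL d t = linearCombination ℝ (Ebar d t) := by
  ext x
  simp [EbarL, linearCombination_apply]

theorem mapDomain_append_singleton_mapDomain_cons (a b : Fin (d + 1)) (z : KA d) :
    mapDomain (· ++ [b]) (mapDomain (List.cons a) z)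
      = mapDomain (List.cons a) (mapDomain (· ++ [b]) z) := by
  rw [← mapDomain_comp, ← mapDomain_comp]
  rfl

theorem shuffleWord_append_singleton (a b : Fin (d + 1)) : ∀ u v : Word d,
    shuffleWord d (u ++ [a]) (v ++ [b]) =
      mapDomain (· ++ [a]) (shuffleWord d u (v ++ [b])) +
      mapDomain (· ++ [b]) (shuffleWord d (u ++ [a]) v)
  | [], [] => by simp [shuffleWord_cons_cons, add_comm]
  | [], e :: v => by
    have ih := shuffleWord_append_singleton a b [] v
    simp_all [shuffleWord_cons_cons, mapDomain_add, mapDomain_append_singleton_mapDomain_cons]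
    abel
  | c :: u, [] => by
    have ih := shuffleWord_append_singleton a b u []
    simp_all [shuffleWord_cons_cons, mapDomain_add, mapDomain_append_singleton_mapDomain_cons]
    abel
  | c :: u, e :: v => by
    have ih₁ := shuffleWord_append_singleton a b u (e :: v)
    have ih₂ := shuffleWord_append_singleton a b (c :: u) v
    simp_all [shuffleWord_cons_cons, mapDomain_add, mapDomain_append_singleton_mapDomain_cons]
    abel
termination_by u v => u.length + v.length

theorem shuffleWord_reverse : ∀ u v : Word d,
    shuffleWord d u.reverse v.reverse = mapDomain List.reverse (shuffleWord d u v)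
  | [], v => by simp
  | c :: u, [] => by simp
  | c :: u, e :: v => by
    have ih₁ := shuffleWord_reverse u (e :: v)
    have ih₂ := shuffleWord_reverse (c :: u) v
    have hrev (x : Fin (d + 1)) (z : KA d) :
        mapDomain (· ++ [x]) (mapDomain List.reverse z)
          = mapDomain List.reverse (mapDomain (List.cons x) z) := by
      rw [← mapDomain_comp, ← mapDomain_comp]
      congr 1
      funext l
      simp
    rw [List.reverse_cons, List.reverse_cons, shuffleWord_append_singleton,
      ← List.reverse_cons, ← List.reverse_cons, ih₁, ih₂, hrev, hrev, ← mapDomain_add,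
      ← shuffleWord_cons_cons]
termination_by u v => u.length + v.length

theorem Ebar_reverse (t : ℝ) (w : Word d) : Ebar d t w.reverse = Ebar d t w := by
  simp only [Ebar, nc, zc, dc, List.count_reverse, List.length_reverse]
  congr 1
  exact propext Admissible.reverse_iff

theorem revE_single (w : Word d) (c : ℝ) : revE d (single w c) = single w.reverse c := by
  simp [revE, wordLift_single]

theorem Sa_single (w : Word d) :
    Sa d (single w 1) = (-1 : ℝ) ^ w.length • revE d (single w 1) := by
  simp [Sa, revE_single, wordLift_single]

theorem EE_single (t : ℝ) (w : Word d) (c : ℝ) :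
    EE d t (single w c) = single [] (c * Ebar d t w) := by
  rw [EE, wordLift_single, smul_single, smul_eq_mul]

theorem revE_eq_lmapDomain : revE d = lmapDomain ℝ ℝ List.reverse :=
  lhom_ext fun w c => by simp [revE_single]

theorem sub_EE_comp_revE (t : ℝ) :
    (idE d - EE d t) ∘ₗ revE d = revE d ∘ₗ (idE d - EE d t) :=
  lhom_ext fun w c => by simp [idE, revE_single, EE_single, Ebar_reverse, -single_mul]

theorem shuffleBilin_revE (x y : KA d) :
    shuffleBilin d (revE d x) (revE d y) = revE d (shuffleBilin d x y) := by
  induction x using Finsupp.induction_linear with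
  | zero => simp
  | add x x' hx hx' => simp [hx, hx']
  | single u a =>
    induction y using Finsupp.induction_linear with
    | zero => simp
    | add y y' hy hy' => simp [hy, hy']
    | single v b =>
      rw [revE_single, revE_single, shuffleBilin_single_single, shuffleBilin_single_single,
        map_smul, shuffleWord_reverse, revE_eq_lmapDomain, lmapDomain_apply]

theorem linearCombination_Ebar_revE (t : ℝ) (x : KA d) :
    linearCombination ℝ (Ebar d t) (revE d x) = linearCombination ℝ (Ebar d t) x := by
  rw [revE_eq_lmapDomain, lmapDomain_apply, linearCombination_mapDomain]
  simp_rw [Function.comp_def, Ebar_reverse]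

noncomputable def centredForm (d : ℕ) (t : ℝ) : KA d →ₗ[ℝ] KA d →ₗ[ℝ] ℝ :=
  ((shuffleBilin d).compl₁₂ (idE d - EE d t) (idE d - EE d t)).compr₂
    (linearCombination ℝ (Ebar d t))

theorem centredForm_apply (t : ℝ) (x y : KA d) :
    centredForm d t x y = EbarL d t (sh d ((idE d - EE d t) x) ((idE d - EE d t) y)) := by
  rw [EbarL_eq_linearCombination, sh_eq_shuffleBilin]
  rfl

theorem centredForm_revE (t : ℝ) (x y : KA d) :
    centredForm d t (revE d x) (revE d y) = centredForm d t x y := by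
  simp only [centredForm, LinearMap.compr₂_apply, LinearMap.compl₁₂_apply]
  rw [← LinearMap.comp_apply (idE d - EE d t), ← LinearMap.comp_apply (idE d - EE d t),
    sub_EE_comp_revE, LinearMap.comp_apply, LinearMap.comp_apply, shuffleBilin_revE,
    linearCombination_Ebar_revE]

theorem centredForm_Sa_single (t : ℝ) {u v : Word d} (huv : u.length = v.length) :
    centredForm d t (Sa d (single u 1)) (Sa d (single v 1))
      = centredForm d t (single u 1) (single v 1) := by
  have hsign : (-1 : ℝ) ^ v.length * (-1) ^ v.length = 1 := by
    rw [← pow_add, ← two_mul, pow_mul, neg_one_sq, one_pow]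
  rw [Sa_single, Sa_single, map_smul, map_smul, LinearMap.smul_apply, centredForm_revE,
    smul_smul, huv, smul_eq_mul, hsign, one_mul]

end

theorem stmt_7_general (d n : ℕ) (t : ℝ)
    {H : Type*} [NormedAddCommGroup H] [InnerProductSpace ℝ H]
    (Vf : Word d → H) :
    ip d t Vf n ((idE d - EE d t) ∘ₗ idE d) ((idE d - EE d t) ∘ₗ idE d)
      = ip d t Vf n ((idE d - EE d t) ∘ₗ ((1 / 2 : ℝ) • (idE d - Sa d)))
                    ((idE d - EE d t) ∘ₗ ((1 / 2 : ℝ) • (idE d - Sa d)))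
        + ip d t Vf n ((idE d - EE d t) ∘ₗ ((1 / 2 : ℝ) • (idE d + Sa d)))
                      ((idE d - EE d t) ∘ₗ ((1 / 2 : ℝ) • (idE d + Sa d))) := by
  simp only [ip, ← Finset.sum_add_distrib, ← add_mul, LinearMap.comp_apply, ← centredForm_apply]
  refine Finset.sum_congr rfl fun u _ => Finset.sum_congr rfl fun v _ => ?_
  congr 1
  simpa [idE] using (centredForm d t).apply_eq_apply_half_sub_add_apply_half_add (Sa d)
    (centredForm_Sa_single t (by simp))

theorem stmt_7 (d n : ℕ) (hd : 1 ≤ d) (hn : 1 ≤ n) (t : ℝ) (ht : 0 < t)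
    {H : Type*} [NormedAddCommGroup H] [InnerProductSpace ℝ H]
    (Vf : Word d → H) :
    ip d t Vf n ((idE d - EE d t) ∘ₗ idE d) ((idE d - EE d t) ∘ₗ idE d)
      = ip d t Vf n ((idE d - EE d t) ∘ₗ ((1 / 2 : ℝ) • (idE d - Sa d)))
                    ((idE d - EE d t) ∘ₗ ((1 / 2 : ℝ) • (idE d - Sa d)))
        + ip d t Vf n ((idE d - EE d t) ∘ₗ ((1 / 2 : ℝ) • (idE d + Sa d)))
                      ((idE d - EE d t) ∘ₗ ((1 / 2 : ℝ) • (idE d + Sa d))) :=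
  stmt_7_general d n t Vf
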